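/- The minimum of Δ_λ(f) over all f ∈ 𝓛(P_{X|S=0}) equals −√((λ₂a₁ + λ₄ρ_m b₁)² + (λ₂a₂)²). -/

import Mathlib

/-!
For centered `f`, the right derivative of `ε ↦ L_λ(P̃_{X|S=0})` at `0` is the weighted inner
product `E[f w | S=0]` with `w = λ₂ f_l + λ₄ ρ_m b₁ f_m`: the `λ₁`, `λ₃` terms are at their
minimum, the centering constants of the log-likelihood ratios are killed by `E[f | S=0] = 0`,
and on the two-point output alphabet the centered log-likelihood ratio `g_l` is the multiple
`b₁ g_m` of the centered unit vector `g_m`, whose pull-back through the channel is `ρ_m f_m`.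
By Cauchy–Schwarz the minimum of `E[f w]` over centered unit `f` is `-‖w‖`, attained at
`-w / ‖w‖`; and `f_l = a₁ f_m + (f_l - a₁ f_m)` is an orthogonal decomposition, so
`‖w‖² = (λ₂ a₁ + λ₄ ρ_m b₁)² + (λ₂ a₂)²`.
-/

open Filter Topology

noncomputable def KLdiv {α : Type*} [Fintype α] (P Q : α → ℝ) : ℝ :=
  ∑ a, P a * Real.log (P a / Q a)

/-- The objective `L_λ` evaluated at the perturbed distribution
`P̃_{X|S=0}(x) = P0(x)(1+εf(x))`, with `P̃_{Y|S=0} = W ∘ P̃_{X|S=0}`.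
At `ε = 0` this is `L_λ(P_{X|S=0})`. -/
noncomputable def Lobj {𝒳 : Type*} [Fintype 𝒳]
    (P0 P1 : 𝒳 → ℝ) (W : 𝒳 → Bool → ℝ) (Q0 Q1 : Bool → ℝ)
    (l1 l2 l3 l4 : ℝ) (f : 𝒳 → ℝ) (ε : ℝ) : ℝ :=
  l1 * KLdiv (fun x => P0 x * (1 + ε * f x)) P0
    + l2 * KLdiv (fun x => P0 x * (1 + ε * f x)) P1
    + l3 * KLdiv (fun y => ∑ x, P0 x * (1 + ε * f x) * W x y) Q0
    + l4 * KLdiv (fun y => ∑ x, P0 x * (1 + ε * f x) * W x y) Q1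

open Finset

section WeightedSums

variable {α : Type*} [Fintype α]

lemma sum_mul_add_const_of_sum_eq_zero {h : α → ℝ} (hh : ∑ a, h a = 0) (g : α → ℝ)
    (c : ℝ) :
    ∑ a, h a * (g a + c) = ∑ a, h a * g a := by
  simp only [mul_add, sum_add_distrib, ← sum_mul, hh, zero_mul, add_zero]

lemma sum_mul_sub_sum_mul_eq_zero {P : α → ℝ} (hP : ∑ a, P a = 1) (g : α → ℝ) :
    ∑ a, P a * (g a - ∑ b, P b * g b) = 0 := by
  simp only [mul_sub, sum_sub_distrib, ← sum_mul, hP, one_mul, sub_self]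

/-- Pythagoras for the orthogonal decomposition `v = k u + (v - k u)`, `k = ⟨v, u⟩`, along a
unit vector `u`. -/
lemma sum_mul_add_mul_sq {P u v : α → ℝ} (hu : ∑ a, P a * u a ^ 2 = 1)
    (b c : ℝ) :
    ∑ a, P a * (b * v a + c * u a) ^ 2
      = (b * ∑ a, P a * (v a * u a) + c) ^ 2
        + b ^ 2 * ∑ a, P a * (v a - (∑ a, P a * (v a * u a)) * u a) ^ 2 := by
  set k := ∑ a, P a * (v a * u a)
  have hdiff : ∑ a, P a * (b * v a + c * u a) ^ 2 - b ^ 2 * ∑ a, P a * (v a - k * u a) ^ 2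
      = 2 * b * (c + k * b) * k + (c ^ 2 - k ^ 2 * b ^ 2) * ∑ a, P a * u a ^ 2 := by
    rw [mul_sum, ← sum_sub_distrib, mul_sum, mul_sum, ← sum_add_distrib]
    exact sum_congr rfl fun a _ => by ring
  rw [hu] at hdiff
  linear_combination hdiff

lemma abs_sum_mul_mul_le_sqrt {P w : α → ℝ} (hP : ∀ a, 0 ≤ P a) {f : α → ℝ}
    (hf : ∑ a, P a * f a ^ 2 = 1) :
    |∑ a, P a * f a * w a| ≤ √(∑ a, P a * w a ^ 2) := by
  have hcs : (∑ a, P a * f a * w a) ^ 2 ≤ (∑ a, P a * f a ^ 2) * ∑ a, P a * w a ^ 2 :=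
    sum_sq_le_sum_mul_sum_of_sq_le_mul _ (fun a _ => mul_nonneg (hP a) (sq_nonneg _))
      (fun a _ => mul_nonneg (hP a) (sq_nonneg _)) fun a _ => le_of_eq (by ring)
  rw [hf, one_mul] at hcs
  exact Real.abs_le_sqrt hcs

lemma sum_mul_div_sqrt_sq {P v : α → ℝ} (hv : 0 < √(∑ a, P a * v a ^ 2)) :
    ∑ a, P a * (v a / √(∑ a, P a * v a ^ 2)) ^ 2 = 1 := by
  have hpos := Real.sqrt_pos.1 hv
  simp only [div_pow, mul_div_assoc', ← sum_div]
  rw [Real.sq_sqrt hpos.le]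
  exact div_self hpos.ne'

theorem isLeast_sum_mul_mul {P w : α → ℝ} (hP : ∀ a, 0 ≤ P a) (hw : ∑ a, P a * w a = 0)
    (hne : ∃ f : α → ℝ, ∑ a, P a * f a = 0 ∧ ∑ a, P a * f a ^ 2 = 1) :
    IsLeast {D | ∃ f : α → ℝ, ∑ a, P a * f a = 0 ∧ ∑ a, P a * f a ^ 2 = 1 ∧
        D = ∑ a, P a * f a * w a}
      (-√(∑ a, P a * w a ^ 2)) := by
  refine ⟨?_, fun D ⟨f, _, hf, hD⟩ =>
    hD ▸ neg_le_of_abs_le (abs_sum_mul_mul_le_sqrt hP hf)⟩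
  rcases (Real.sqrt_nonneg (∑ a, P a * w a ^ 2)).eq_or_lt with hN0 | hNpos
  · obtain ⟨f, hf0, hf1⟩ := hne
    have hfw := abs_sum_mul_mul_le_sqrt (w := w) hP hf1
    rw [← hN0, abs_nonpos_iff] at hfw
    exact ⟨f, hf0, hf1, by rw [← hN0, neg_zero, hfw]⟩
  · set N := √(∑ a, P a * w a ^ 2)
    have hN : N ^ 2 = ∑ a, P a * w a ^ 2 :=
      Real.sq_sqrt (sum_nonneg fun a _ => mul_nonneg (hP a) (sq_nonneg _))
    refine ⟨fun a => -w a / N, ?_, ?_, ?_⟩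
    · simp only [mul_div_assoc', mul_neg, neg_div, sum_neg_distrib, ← sum_div, hw, neg_zero,
        zero_div]
    · simpa only [neg_div, neg_sq] using sum_mul_div_sqrt_sq hNpos
    · simp only [neg_div, mul_neg, neg_mul, sum_neg_distrib, mul_div_assoc', div_mul_eq_mul_div,
        ← sum_div, mul_assoc, ← sq, ← hN]
      field_simp

theorem isLeast_of_tendsto_sum_mul_mul {P w : α → ℝ} (hP : ∀ a, 0 ≤ P a)
    (hw : ∑ a, P a * w a = 0)
    (hne : ∃ f : α → ℝ, ∑ a, P a * f a = 0 ∧ ∑ a, P a * f a ^ 2 = 1)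
    {l : Filter ℝ} [l.NeBot] {F : (α → ℝ) → ℝ → ℝ}
    (hF : ∀ f, ∑ a, P a * f a = 0 → Tendsto (F f) l (𝓝 (∑ a, P a * f a * w a))) :
    IsLeast {D | ∃ f : α → ℝ, ∑ a, P a * f a = 0 ∧ ∑ a, P a * f a ^ 2 = 1 ∧
        Tendsto (F f) l (𝓝 D)}
      (-√(∑ a, P a * w a ^ 2)) := by
  convert isLeast_sum_mul_mul hP hw hne using 1
  ext D
  exact exists_congr fun f => and_congr_right fun hf => and_congr_right fun _ =>
    ⟨fun h => tendsto_nhds_unique h (hF f hf), fun h => h ▸ hF f hf⟩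

end WeightedSums

section Binary

/-- The function `g_m` of the paper, for `p = P_{Y|S=0}(1)`. -/
noncomputable def binaryScore (p : ℝ) : Bool → ℝ
  | false => √(p / (1 - p))
  | true => -√((1 - p) / p)

variable {q : Bool → ℝ}

lemma sum_mul_binaryScore (hq : ∀ y, 0 < q y) (hq1 : ∑ y, q y = 1) :
    ∑ y, q y * binaryScore (q true) y = 0 := by
  have h1 : 1 - q true = q false := by rw [Fintype.sum_bool] at hq1; linarith
  have := Real.sqrt_pos.2 (hq true)
  have := Real.sqrt_pos.2 (hq false)
  simp only [Fintype.sum_bool, binaryScore, h1, Real.sqrt_div (hq _).le]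
  field_simp
  rw [Real.sq_sqrt (hq true).le, Real.sq_sqrt (hq false).le]
  ring

lemma sum_mul_binaryScore_sq (hq : ∀ y, 0 < q y) (hq1 : ∑ y, q y = 1) :
    ∑ y, q y * binaryScore (q true) y ^ 2 = 1 := by
  have h1 : 1 - q true = q false := by rw [Fintype.sum_bool] at hq1; linarith
  have := hq true
  have := hq false
  simp only [Fintype.sum_bool, binaryScore, h1, neg_sq, Real.sq_sqrt (div_pos (hq _) (hq _)).le]
  field_simp
  linear_combination (Fintype.sum_bool q).symm.trans hq1

/-- The centered functions on a two-point space form a line. -/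
lemma Bool.eq_sum_mul_mul_of_centered (hq : ∀ y, q y ≠ 0) {g u : Bool → ℝ}
    (hg : ∑ y, q y * g y = 0) (hu : ∑ y, q y * u y = 0) (hu2 : ∑ y, q y * u y ^ 2 = 1)
    (y : Bool) : g y = (∑ y', q y' * (g y' * u y')) * u y := by
  rw [Fintype.sum_bool] at hg hu hu2 ⊢
  cases y
  · refine mul_left_cancel₀ (hq false) ?_
    linear_combination (-(q false * g false) * hu2) + (q false * g false * u true) * hu
      - (u false * q false * u true) * hg
  · refine mul_left_cancel₀ (hq true) ?_
    linear_combination (-(q true * g true) * hu2) + (q true * g true * u false) * hu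
      - (u true * q true * u false) * hg

end Binary

section Derivative

lemma hasDerivAt_mul_log_div_line {q d : ℝ} (hq : 0 < q) (hd : 0 < d) (h : ℝ) :
    HasDerivAt (fun ε : ℝ => (q + ε * h) * Real.log ((q + ε * h) / d))
      (h * (Real.log (q / d) + 1)) 0 := by
  have hline : HasDerivAt (fun ε : ℝ => q + ε * h) h 0 := by
    simpa using ((hasDerivAt_id (0 : ℝ)).mul_const h).const_add q
  have hlog := (hline.div_const d).log (by simp only [zero_mul, add_zero]; positivity)
  refine (hline.mul hlog).congr_deriv ?_
  simp only [zero_mul, add_zero]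
  field_simp

variable {α : Type*} [Fintype α]

lemma hasDerivAt_KLdiv_line {P Q h : α → ℝ} (hP : ∀ a, 0 < P a) (hQ : ∀ a, 0 < Q a)
    (hh : ∑ a, h a = 0) :
    HasDerivAt (fun ε => KLdiv (fun a => P a + ε * h a) Q)
      (∑ a, h a * Real.log (P a / Q a)) 0 := by
  have hsum := HasDerivAt.fun_sum (u := univ)
    fun a _ => hasDerivAt_mul_log_div_line (hP a) (hQ a) (h a)
  refine hsum.congr_deriv ?_
  simpa using sum_mul_add_const_of_sum_eq_zero hh (fun a => Real.log (P a / Q a)) 1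

variable {𝒳 : Type*} [Fintype 𝒳] {P0 P1 : 𝒳 → ℝ} {W : 𝒳 → Bool → ℝ}
  {Q0 Q1 : Bool → ℝ}

lemma Lobj_eq (hQ0 : ∀ y, Q0 y = ∑ x, P0 x * W x y) (l1 l2 l3 l4 : ℝ) (f : 𝒳 → ℝ) :
    Lobj P0 P1 W Q0 Q1 l1 l2 l3 l4 f = fun ε =>
      l1 * KLdiv (fun x => P0 x + ε * (P0 x * f x)) P0
        + l2 * KLdiv (fun x => P0 x + ε * (P0 x * f x)) P1
        + l3 * KLdiv (fun y => Q0 y + ε * ∑ x, P0 x * f x * W x y) Q0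
        + l4 * KLdiv (fun y => Q0 y + ε * ∑ x, P0 x * f x * W x y) Q1 := by
  have hX : ∀ ε, (fun x => P0 x * (1 + ε * f x)) = fun x => P0 x + ε * (P0 x * f x) :=
    fun ε => funext fun x => by ring
  have hY : ∀ ε, (fun y => ∑ x, P0 x * (1 + ε * f x) * W x y)
      = fun y => Q0 y + ε * ∑ x, P0 x * f x * W x y := fun ε => funext fun y => by
    rw [hQ0, mul_sum, ← sum_add_distrib]
    exact sum_congr rfl fun x _ => by ring
  funext ε
  rw [Lobj, hX, hY]

lemma sum_sum_mul_channel (hW : ∀ x, W x false + W x true = 1) (h : 𝒳 → ℝ) :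
    ∑ y, ∑ x, h x * W x y = ∑ x, h x := by
  rw [sum_comm]
  exact sum_congr rfl fun x _ => by
    rw [← mul_sum, Fintype.sum_bool, add_comm, hW, mul_one]

lemma sum_channel_mul (h : 𝒳 → ℝ) (g : Bool → ℝ) :
    ∑ y, (∑ x, h x * W x y) * g y = ∑ x, h x * (g false * W x false + g true * W x true) := by
  simp only [Fintype.sum_bool, sum_mul, ← sum_add_distrib]
  exact sum_congr rfl fun x _ => by ring

lemma hasDerivAt_Lobj (hP0 : ∀ x, 0 < P0 x) (hP1 : ∀ x, 0 < P1 x)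
    (hW : ∀ x, W x false + W x true = 1) (hQ0 : ∀ y, Q0 y = ∑ x, P0 x * W x y)
    (hQ0pos : ∀ y, 0 < Q0 y) (hQ1pos : ∀ y, 0 < Q1 y) (l1 l2 l3 l4 : ℝ) {f : 𝒳 → ℝ}
    (hf : ∑ x, P0 x * f x = 0) :
    HasDerivAt (Lobj P0 P1 W Q0 Q1 l1 l2 l3 l4 f)
      (l2 * ∑ x, P0 x * f x * Real.log (P0 x / P1 x)
        + l4 * ∑ y, (∑ x, P0 x * f x * W x y) * Real.log (Q0 y / Q1 y)) 0 := by
  have hY : ∑ y, ∑ x, P0 x * f x * W x y = 0 := (sum_sum_mul_channel hW _).trans hf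
  rw [Lobj_eq hQ0]
  refine ((((hasDerivAt_KLdiv_line hP0 hP0 hf).const_mul l1).add
    ((hasDerivAt_KLdiv_line hP0 hP1 hf).const_mul l2)).add
    ((hasDerivAt_KLdiv_line hQ0pos hQ0pos hY).const_mul l3)).add
    ((hasDerivAt_KLdiv_line hQ0pos hQ1pos hY).const_mul l4) |>.congr_deriv ?_
  simp [div_self (hP0 _).ne', div_self (hQ0pos _).ne']

lemma tendsto_slope_Lobj (hP0 : ∀ x, 0 < P0 x) (hP1 : ∀ x, 0 < P1 x)
    (hW : ∀ x, W x false + W x true = 1) (hQ0 : ∀ y, Q0 y = ∑ x, P0 x * W x y)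
    (hQ0pos : ∀ y, 0 < Q0 y) (hQ1pos : ∀ y, 0 < Q1 y) (l1 l2 l3 l4 : ℝ)
    {fl : 𝒳 → ℝ} (hfl : ∃ c, ∀ x, Real.log (P0 x / P1 x) = fl x + c)
    {gm : Bool → ℝ} {b : ℝ} (hgl : ∃ c, ∀ y, Real.log (Q0 y / Q1 y) = b * gm y + c)
    {f : 𝒳 → ℝ} (hf : ∑ x, P0 x * f x = 0) :
    Tendsto
      (fun ε => (Lobj P0 P1 W Q0 Q1 l1 l2 l3 l4 f ε - Lobj P0 P1 W Q0 Q1 l1 l2 l3 l4 f 0) / ε)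
      (𝓝[>] 0)
      (𝓝 (∑ x, P0 x * f x *
        (l2 * fl x + l4 * b * (gm false * W x false + gm true * W x true)))) := by
  obtain ⟨cX, hlogX⟩ := hfl
  obtain ⟨cY, hlogY⟩ := hgl
  have hY : ∑ y, ∑ x, P0 x * f x * W x y = 0 := (sum_sum_mul_channel hW _).trans hf
  have hd := hasDerivAt_Lobj hP0 hP1 hW hQ0 hQ0pos hQ1pos l1 l2 l3 l4 hf
  simp only [hlogX, hlogY, sum_mul_add_const_of_sum_eq_zero hf,
    sum_mul_add_const_of_sum_eq_zero hY, sum_channel_mul, mul_sum,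
    ← sum_add_distrib] at hd
  convert hd.tendsto_slope_zero_right using 2 with ε
  · rw [zero_add, smul_eq_mul, div_eq_inv_mul]
  · exact sum_congr rfl fun x _ => by ring

end Derivative

theorem stmt4_general
    {𝒳 : Type*} [Fintype 𝒳]
    (P0 P1 : 𝒳 → ℝ)
    (hP0pos : ∀ x, 0 < P0 x) (hP0sum : ∑ x, P0 x = 1)
    (hP1pos : ∀ x, 0 < P1 x)
    (W : 𝒳 → Bool → ℝ)
    (hWsum : ∀ x, W x false + W x true = 1)
    (Q0 Q1 : Bool → ℝ)
    (hQ0 : ∀ y, Q0 y = ∑ x, P0 x * W x y)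
    (hQ0pos : ∀ y, 0 < Q0 y) (hQ1pos : ∀ y, 0 < Q1 y)
    (l1 l2 l3 l4 : ℝ)
    (fl : 𝒳 → ℝ)
    (hfl : ∀ x, fl x = Real.log (P0 x / P1 x) - ∑ x', P0 x' * Real.log (P0 x' / P1 x'))
    (gl : Bool → ℝ)
    (hgl : ∀ y, gl y = Real.log (Q0 y / Q1 y) - ∑ y', Q0 y' * Real.log (Q0 y' / Q1 y'))
    (gm : Bool → ℝ)
    (hgmf : gm false = Real.sqrt (Q0 true / (1 - Q0 true)))
    (hgmt : gm true = -Real.sqrt ((1 - Q0 true) / Q0 true))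
    (ρm : ℝ)
    (hρm : ρm = Real.sqrt (∑ x, P0 x * (gm false * W x false + gm true * W x true) ^ 2))
    (hρmpos : 0 < ρm)
    (fm : 𝒳 → ℝ)
    (hfm : ∀ x, fm x = (gm false * W x false + gm true * W x true) / ρm)
    (a1 a2 b1 : ℝ)
    (ha1 : a1 = ∑ x, P0 x * (fl x * fm x))
    (ha2 : a2 = Real.sqrt (∑ x, P0 x * (fl x - a1 * fm x) ^ 2))
    (hb1 : b1 = ∑ y, Q0 y * (gl y * gm y)) :
    IsLeast
      {D : ℝ | ∃ f : 𝒳 → ℝ,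
        (∑ x, P0 x * f x = 0) ∧ (∑ x, P0 x * f x ^ 2 = 1) ∧
        Tendsto
          (fun ε : ℝ =>
            (Lobj P0 P1 W Q0 Q1 l1 l2 l3 l4 f ε
              - Lobj P0 P1 W Q0 Q1 l1 l2 l3 l4 f 0) / ε)
          (nhdsWithin 0 (Set.Ioi 0)) (nhds D)}
      (-Real.sqrt ((l2 * a1 + l4 * ρm * b1) ^ 2 + (l2 * a2) ^ 2)) := by
  have hQ0sum : ∑ y, Q0 y = 1 := by
    simp only [hQ0]; rw [sum_sum_mul_channel hWsum, hP0sum]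
  have hgm : gm = binaryScore (Q0 true) := funext fun y => by
    cases y <;> simp only [binaryScore, hgmf, hgmt]
  have hgm0 := hgm ▸ sum_mul_binaryScore hQ0pos hQ0sum
  have hglgm : ∀ y, gl y = b1 * gm y := fun y => hb1 ▸
    Bool.eq_sum_mul_mul_of_centered (fun y => (hQ0pos y).ne')
      (funext hgl ▸ sum_mul_sub_sum_mul_eq_zero hQ0sum _) hgm0
      (hgm ▸ sum_mul_binaryScore_sq hQ0pos hQ0sum) y
  have hfm0 : ∑ x, P0 x * fm x = 0 := by
    simp only [hfm, mul_div_assoc', ← sum_div, ← sum_channel_mul, ← hQ0, hgm0, zero_div]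
  have hfm1 : ∑ x, P0 x * fm x ^ 2 = 1 :=
    funext hfm ▸ hρm ▸ sum_mul_div_sqrt_sq (hρm ▸ hρmpos)
  have hfl0 : ∑ x, P0 x * fl x = 0 := funext hfl ▸ sum_mul_sub_sum_mul_eq_zero hP0sum _
  set w : 𝒳 → ℝ := fun x => l2 * fl x + l4 * ρm * b1 * fm x
  have hw0 : ∑ x, P0 x * w x = 0 := by
    simp only [w, mul_add, sum_add_distrib, mul_left_comm (P0 _), ← mul_sum, hfl0, hfm0,
      mul_zero, add_zero]
  have hw2 : ∑ x, P0 x * w x ^ 2 = (l2 * a1 + l4 * ρm * b1) ^ 2 + (l2 * a2) ^ 2 := by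
    rw [sum_mul_add_mul_sq hfm1, ← ha1, ha2, mul_pow,
      Real.sq_sqrt (sum_nonneg fun x _ => mul_nonneg (hP0pos x).le (sq_nonneg _))]
  rw [← hw2]
  refine isLeast_of_tendsto_sum_mul_mul (fun x => (hP0pos x).le) hw0 ⟨fm, hfm0, hfm1⟩
    fun f hf => ?_
  convert tendsto_slope_Lobj hP0pos hP1pos hWsum hQ0 hQ0pos hQ1pos l1 l2 l3 l4
    (fl := fl) ⟨_, fun x => by rw [hfl]; ring⟩ (gm := gm) (b := b1)
    ⟨_, fun y => by rw [← hglgm, hgl]; ring⟩ hf using 4 with x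
  simp only [w, hfm]
  field_simp

/-- Corollary 1 of the paper: the minimum of
`Δ_λ(f) = lim_{ε→0⁺}(L_λ(P̃_{X|S=0}) − L_λ(P_{X|S=0}))/ε` over all `f ∈ 𝓛(P_{X|S=0})`
equals `−√((λ₂a₁ + λ₄ρ_m b₁)² + (λ₂a₂)²)`, stated as: this value is the least element of
the set of achieved limit values `Δ_λ(f)`, `f ∈ 𝓛(P_{X|S=0})`.
Setup (`𝒴 = Bool`, channel `W`, `P0/P1/Q0/Q1` full support, `g_m`, `ρ_m`, `f_m`, `f_l`,
`g_l`, `a₁`, `a₂`, `b₁`) as in the paper. -/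
theorem stmt4
    {𝒳 : Type*} [Fintype 𝒳]
    (P0 P1 : 𝒳 → ℝ)
    (hP0pos : ∀ x, 0 < P0 x) (hP0sum : ∑ x, P0 x = 1)
    (hP1pos : ∀ x, 0 < P1 x) (hP1sum : ∑ x, P1 x = 1)
    (W : 𝒳 → Bool → ℝ)
    (hWnn : ∀ x y, 0 ≤ W x y) (hWsum : ∀ x, W x false + W x true = 1)
    (Q0 Q1 : Bool → ℝ)
    (hQ0 : ∀ y, Q0 y = ∑ x, P0 x * W x y) (hQ1 : ∀ y, Q1 y = ∑ x, P1 x * W x y)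
    (hQ0pos : ∀ y, 0 < Q0 y) (hQ1pos : ∀ y, 0 < Q1 y)
    (l1 l2 l3 l4 : ℝ)
    (hl1 : 0 ≤ l1) (hl2 : 0 ≤ l2) (hl3 : 0 ≤ l3) (hl4 : 0 ≤ l4)
    (fl : 𝒳 → ℝ)
    (hfl : ∀ x, fl x = Real.log (P0 x / P1 x) - ∑ x', P0 x' * Real.log (P0 x' / P1 x'))
    (gl : Bool → ℝ)
    (hgl : ∀ y, gl y = Real.log (Q0 y / Q1 y) - ∑ y', Q0 y' * Real.log (Q0 y' / Q1 y'))
    (hp1 : Q0 true < 1)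
    (gm : Bool → ℝ)
    (hgmf : gm false = Real.sqrt (Q0 true / (1 - Q0 true)))
    (hgmt : gm true = -Real.sqrt ((1 - Q0 true) / Q0 true))
    (ρm : ℝ)
    (hρm : ρm = Real.sqrt (∑ x, P0 x * (gm false * W x false + gm true * W x true) ^ 2))
    (hρmpos : 0 < ρm)
    (fm : 𝒳 → ℝ)
    (hfm : ∀ x, fm x = (gm false * W x false + gm true * W x true) / ρm)
    (a1 a2 b1 : ℝ)
    (ha1 : a1 = ∑ x, P0 x * (fl x * fm x))
    (ha2 : a2 = Real.sqrt (∑ x, P0 x * (fl x - a1 * fm x) ^ 2))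
    (hb1 : b1 = ∑ y, Q0 y * (gl y * gm y)) :
    IsLeast
      {D : ℝ | ∃ f : 𝒳 → ℝ,
        (∑ x, P0 x * f x = 0) ∧ (∑ x, P0 x * f x ^ 2 = 1) ∧
        Tendsto
          (fun ε : ℝ =>
            (Lobj P0 P1 W Q0 Q1 l1 l2 l3 l4 f ε
              - Lobj P0 P1 W Q0 Q1 l1 l2 l3 l4 f 0) / ε)
          (nhdsWithin 0 (Set.Ioi 0)) (nhds D)}
      (-Real.sqrt ((l2 * a1 + l4 * ρm * b1) ^ 2 + (l2 * a2) ^ 2)) :=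
  stmt4_general P0 P1 hP0pos hP0sum hP1pos W hWsum Q0 Q1 hQ0 hQ0pos hQ1pos l1 l2 l3 l4 fl hfl gl hgl
    gm hgmf hgmt ρm hρm hρmpos fm hfm a1 a2 b1 ha1 ha2 hb1
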